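/- Let D = (E, s, t) be a demi-matroid with |E| = n and f harmonic of degree d. Define Z_{D,f}(λ, x, y) = ∑_{T ⊆ E, d ≤ |T| ≤ n−d} f̃(T) χ(D.T; λ) x^{|E−T|−d} y^{|T|−d}, where D.T = D/(E−T) and χ(D'; λ) = ∑_{X} (−1)^{|X|} λ^{s'(ground) − s'(X)} is the characteristic polynomial. Then Z_{D,f}(λ, x, y) = (−1)^d ∑_{T ⊆ E, d ≤ |T| ≤ n−d} f̃(T) λ^{s(E) − s(T)} (x−y)^{|T|−d} y^{|E−T|−d}. -/
import Mathlib


open Finset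

variable {ι : Type*} [Fintype ι] [DecidableEq ι]

/-- `f` is harmonic of degree `d`. -/
def IsHarmonic (d : ℕ) (f : Finset ι → ℝ) : Prop :=
  ∀ Y : Finset ι, Y.card + 1 = d →
    ∑ Z ∈ Finset.univ.filter (fun Z : Finset ι => Z.card = d ∧ Y ⊆ Z), f Z = 0

/-- The extension `f̃(X) = ∑_{Z ⊆ X, |Z| = d} f(Z)`. -/
def tilde (d : ℕ) (f : Finset ι → ℝ) (X : Finset ι) : ℝ :=
  ∑ Z ∈ X.powerset.filter (fun Z : Finset ι => Z.card = d), f Z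

/-- A demi-matroid on ground set `E = univ` with integer-valued functions. -/
def IsDemimatroidN (s t : Finset ι → ℕ) : Prop :=
  (∀ ⦃X Y : Finset ι⦄, X ⊆ Y →
      (s X ≤ s Y ∧ s Y ≤ Y.card) ∧ (t X ≤ t Y ∧ t Y ≤ Y.card)) ∧
  (∀ X : Finset ι, ((Xᶜ.card : ℤ) - s Xᶜ = (t Finset.univ : ℤ) - t X))

/-- `Z_{D,f}(λ,x,y) = ∑_{T, d ≤ |T| ≤ n-d} f̃(T) χ(D.T; λ) x^{|E-T|-d} y^{|T|-d}`,
where `χ(D.T; λ) = ∑_{X ⊆ T} (-1)^{|X|} λ^{s(E) - s(X ∪ (E-T))}` is the characteristic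
polynomial of the contraction `D.T = D/(E-T)`. -/
def Zdemi (s : Finset ι → ℕ) (d : ℕ) (f : Finset ι → ℝ) (lam x y : ℝ) : ℝ :=
  ∑ T ∈ Finset.univ.filter
      (fun T : Finset ι => d ≤ T.card ∧ T.card ≤ Fintype.card ι - d),
    tilde d f T *
      (∑ X ∈ T.powerset, (-1 : ℝ) ^ X.card * lam ^ (s Finset.univ - s (X ∪ Tᶜ))) *
      x ^ (Tᶜ.card - d) * y ^ (T.card - d)

private lemma HTP_sum_pow_card (C : Finset ι) (a b : ℝ) :
    ∑ S ∈ C.powerset, a ^ S.card * b ^ (C \ S).card = (a + b) ^ C.card := by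
  have h := Finset.prod_add (fun _ : ι => a) (fun _ : ι => b) C
  simp only [Finset.prod_const] at h
  exact h.symm


private lemma HTP_sum_powerset_neg_one (C : Finset ι) :
    ∑ S ∈ C.powerset, (-1 : ℝ) ^ S.card = if C = ∅ then 1 else 0 := by
  have h := HTP_sum_pow_card C (-1) 1
  simp only [one_pow, mul_one] at h
  have h2 : (-1 : ℝ) + 1 = 0 := by norm_num
  rw [h2] at h
  rw [h, zero_pow_eq]
  simp [Finset.card_eq_zero]


private lemma HTP_powfilter (T : Finset ι) (p : Finset ι → Prop) [DecidablePred p] :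
    T.powerset.filter p = univ.filter (fun Z => Z ⊆ T ∧ p Z) := by
  ext Z; simp [Finset.mem_powerset]


private lemma HTP_harmonic_aux (d : ℕ) (f : Finset ι → ℝ) (hf : IsHarmonic d f) :
    ∀ k, ∀ W : Finset ι, W.card + 1 + k = d →
      ∑ Z ∈ univ.filter (fun Z : Finset ι => Z.card = d ∧ W ⊆ Z), f Z = 0 := by
  intro k
  induction k with
  | zero => intro W hW; exact hf W (by omega)
  | succ k ih =>
    intro W hW
    have step1 : ∀ a : ι, ∑ Z ∈ univ.filter (fun Z : Finset ι => Z.card = d ∧ insert a W ⊆ Z), f Z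
        = ∑ Z ∈ univ.filter (fun Z : Finset ι => Z.card = d ∧ W ⊆ Z), if a ∈ Z then f Z else 0 := by
      intro a
      rw [Finset.sum_filter, Finset.sum_filter]
      apply Finset.sum_congr rfl
      intro Z _
      by_cases h1 : a ∈ Z <;> by_cases h2 : Z.card = d <;> by_cases h3 : W ⊆ Z <;>
        simp_all [Finset.insert_subset_iff]
    have key : ∑ a ∈ Wᶜ, ∑ Z ∈ univ.filter (fun Z : Finset ι => Z.card = d ∧ insert a W ⊆ Z), f Z
        = ((d - W.card : ℕ) : ℝ) * ∑ Z ∈ univ.filter (fun Z : Finset ι => Z.card = d ∧ W ⊆ Z), f Z := by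
      rw [Finset.sum_congr rfl (fun a _ => step1 a), Finset.sum_comm, Finset.mul_sum]
      apply Finset.sum_congr rfl
      intro Z hZ
      simp only [Finset.mem_filter, Finset.mem_univ, true_and] at hZ
      have e1 : Wᶜ.filter (fun a => a ∈ Z) = Z \ W := by
        ext a; simp [Finset.mem_sdiff, Finset.mem_compl, and_comm]
      calc ∑ a ∈ Wᶜ, (if a ∈ Z then f Z else 0)
          = ∑ a ∈ Wᶜ.filter (fun a => a ∈ Z), f Z := (Finset.sum_filter _ _).symm
        _ = ((Z \ W).card : ℝ) * f Z := by rw [e1, Finset.sum_const, nsmul_eq_mul]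
        _ = ((d - W.card : ℕ) : ℝ) * f Z := by rw [Finset.card_sdiff_of_subset hZ.2, hZ.1]
    have hz : ∀ a ∈ Wᶜ, ∑ Z ∈ univ.filter (fun Z : Finset ι => Z.card = d ∧ insert a W ⊆ Z), f Z = 0 := by
      intro a ha
      exact ih (insert a W) (by rw [Finset.card_insert_of_notMem (Finset.mem_compl.mp ha)]; omega)
    rw [Finset.sum_congr rfl hz, Finset.sum_const, smul_zero] at key
    have hc : ((d - W.card : ℕ) : ℝ) ≠ 0 := by
      have : d - W.card = k + 2 := by omega
      rw [this]; positivity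
    exact (mul_eq_zero.mp key.symm).resolve_left hc

private lemma HTP_S_eval (d : ℕ) (f : Finset ι → ℝ) (hf : IsHarmonic d f) (W : Finset ι) :
    ∑ Z ∈ univ.filter (fun Z : Finset ι => Z.card = d ∧ W ⊆ Z), f Z
      = if W.card = d then f W else 0 := by
  rcases lt_trichotomy W.card d with h | h | h
  · rw [if_neg h.ne]; exact HTP_harmonic_aux d f hf (d - W.card - 1) W (by omega)
  · rw [if_pos h]
    have e : univ.filter (fun Z : Finset ι => Z.card = d ∧ W ⊆ Z) = {W} := by
      ext Z
      simp only [Finset.mem_filter, Finset.mem_univ, true_and, Finset.mem_singleton]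
      constructor
      · rintro ⟨h1, h2⟩; exact (Finset.eq_of_subset_of_card_le h2 (by omega)).symm
      · rintro rfl; exact ⟨h, Finset.Subset.refl _⟩
    rw [e, Finset.sum_singleton]
  · rw [if_neg (by omega), Finset.filter_false_of_mem, Finset.sum_empty]
    rintro Z _ ⟨h1, h2⟩
    have := Finset.card_le_card h2; omega

private lemma HTP_tilde_compl (d : ℕ) (f : Finset ι → ℝ) (hf : IsHarmonic d f) (T : Finset ι) :
    tilde d f Tᶜ = (-1 : ℝ) ^ d * tilde d f T := by
  unfold tilde
  calc ∑ Z ∈ Tᶜ.powerset.filter (fun Z : Finset ι => Z.card = d), f Z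
      = ∑ Z ∈ univ.filter (fun Z : Finset ι => Z ⊆ Tᶜ ∧ Z.card = d), f Z := by
        rw [HTP_powfilter]
    _ = ∑ Z ∈ univ.filter (fun Z : Finset ι => Z.card = d), (if Z ∩ T = ∅ then f Z else 0) := by
        rw [Finset.sum_filter, Finset.sum_filter]
        apply Finset.sum_congr rfl
        intro Z _
        have hZT : Z ⊆ Tᶜ ↔ Z ∩ T = ∅ := by
          constructor
          · intro h; ext a
            simp only [Finset.mem_inter, Finset.notMem_empty, iff_false, not_and]
            intro ha1 ha2; exact (Finset.mem_compl.mp (h ha1)) ha2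
          · intro h a ha; rw [Finset.mem_compl]; intro hT
            have : a ∈ Z ∩ T := Finset.mem_inter.mpr ⟨ha, hT⟩
            simp [h] at this
        by_cases h1 : Z ⊆ Tᶜ <;> by_cases h2 : Z.card = d <;> simp_all
    _ = ∑ Z ∈ univ.filter (fun Z : Finset ι => Z.card = d),
          ∑ W ∈ (Z ∩ T).powerset, (-1 : ℝ) ^ W.card * f Z := by
        apply Finset.sum_congr rfl
        intro Z _
        rw [← Finset.sum_mul, HTP_sum_powerset_neg_one]
        by_cases h : Z ∩ T = ∅ <;> simp [h]
    _ = ∑ W ∈ T.powerset,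
          ∑ Z ∈ univ.filter (fun Z : Finset ι => Z.card = d ∧ W ⊆ Z), (-1 : ℝ) ^ W.card * f Z := by
        apply Finset.sum_comm'
        intro Z W
        simp only [Finset.mem_filter, Finset.mem_univ, true_and, Finset.mem_powerset,
          Finset.subset_inter_iff]
        tauto
    _ = ∑ W ∈ T.powerset, (-1 : ℝ) ^ W.card * (if W.card = d then f W else 0) := by
        apply Finset.sum_congr rfl
        intro W _
        rw [← Finset.mul_sum, HTP_S_eval d f hf]
    _ = ∑ W ∈ T.powerset, (if W.card = d then (-1 : ℝ) ^ d * f W else 0) := by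
        apply Finset.sum_congr rfl
        intro W _
        by_cases h : W.card = d <;> simp [h]
    _ = (-1 : ℝ) ^ d * ∑ W ∈ T.powerset.filter (fun Z : Finset ι => Z.card = d), f W := by
        rw [Finset.sum_filter, Finset.mul_sum]
        apply Finset.sum_congr rfl
        intro W _
        by_cases h : W.card = d <;> simp [h]
    _ = (-1 : ℝ) ^ d * ∑ Z ∈ T.powerset.filter (fun Z : Finset ι => Z.card = d), f Z := rfl

private lemma HTP_tilde_zero_lt (d : ℕ) (f : Finset ι → ℝ) (T : Finset ι) (h : T.card < d) :
    tilde d f T = 0 := by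
  unfold tilde
  rw [Finset.filter_false_of_mem, Finset.sum_empty]
  intro Z hZ hc
  have := Finset.card_le_card (Finset.mem_powerset.mp hZ); omega

private lemma HTP_tilde_zero_gt (d : ℕ) (f : Finset ι → ℝ) (hf : IsHarmonic d f) (T : Finset ι)
    (h : Fintype.card ι - d < T.card) : tilde d f T = 0 := by
  have h2 : Tᶜ.card < d := by
    have := Finset.card_le_univ T
    rw [Finset.card_compl]; omega
  calc tilde d f T = tilde d f Tᶜᶜ := by rw [compl_compl]
    _ = (-1:ℝ)^d * tilde d f Tᶜ := HTP_tilde_compl d f hf Tᶜ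
    _ = 0 := by rw [HTP_tilde_zero_lt d f Tᶜ h2, mul_zero]

private lemma HTP_inner_sum (d : ℕ) (V A : Finset ι) (hVA : V ⊆ A) (hd : d ≤ A.card) (x y : ℝ) :
    ∑ T ∈ univ.filter (fun T : Finset ι => A ⊆ T),
        (-1 : ℝ) ^ (T \ V).card * x ^ Tᶜ.card * y ^ (T.card - d)
      = (-1 : ℝ) ^ (A \ V).card * y ^ (A.card - d) * (x - y) ^ Aᶜ.card := by
  have step : ∑ T ∈ univ.filter (fun T : Finset ι => A ⊆ T),
        (-1 : ℝ) ^ (T \ V).card * x ^ Tᶜ.card * y ^ (T.card - d)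
      = ∑ S ∈ Aᶜ.powerset,
        ((-1 : ℝ) ^ (A \ V).card * y ^ (A.card - d)) * ((-y) ^ S.card * x ^ (Aᶜ \ S).card) := by
    apply Finset.sum_nbij' (fun T => T \ A) (fun S => A ∪ S)
    · intro T hT
      simp only [Finset.mem_powerset]
      intro a ha
      simp only [Finset.mem_sdiff] at ha
      exact Finset.mem_compl.mpr ha.2
    · intro S _
      simp only [Finset.mem_filter, Finset.mem_univ, true_and]
      exact Finset.subset_union_left
    · intro T hT
      simp only [Finset.mem_filter, Finset.mem_univ, true_and] at hT
      exact Finset.union_sdiff_of_subset hT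
    · intro S hS
      apply Finset.union_sdiff_cancel_left
      rw [Finset.disjoint_right]
      intro a ha
      exact Finset.mem_compl.mp (Finset.mem_powerset.mp hS ha)
    · intro T hT
      simp only [Finset.mem_filter, Finset.mem_univ, true_and] at hT
      -- disjointness of A and T \ A
      have hdisj : Disjoint A (T \ A) := Finset.disjoint_sdiff
      -- cards
      have hsub : A ⊆ T := hT
      have c1 : (T \ V).card = (A \ V).card + (T \ A).card := by
        have e : T \ V = (A \ V) ∪ (T \ A) := by
          ext a; simp only [Finset.mem_sdiff, Finset.mem_union]
          constructor
          · intro ⟨h1, h2⟩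
            by_cases hA : a ∈ A
            · exact Or.inl ⟨hA, h2⟩
            · exact Or.inr ⟨h1, hA⟩
          · rintro (⟨h1, h2⟩ | ⟨h1, h2⟩)
            · exact ⟨hsub h1, h2⟩
            · refine ⟨h1, fun hv => h2 (hVA hv)⟩
        rw [e, Finset.card_union_of_disjoint]
        rw [Finset.disjoint_left]
        intro a ha hb
        simp only [Finset.mem_sdiff] at ha hb
        exact hb.2 ha.1
      have c2 : Tᶜ = Aᶜ \ (T \ A) := by
        ext a
        simp only [Finset.mem_compl, Finset.mem_sdiff, not_and, not_not]
        constructor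
        · intro h
          exact ⟨fun hA => h (hsub hA), fun h2 => absurd h2 h⟩
        · intro ⟨h1, h2⟩ hT'
          exact h1 (h2 hT')
      have c3 : T.card = A.card + (T \ A).card := by
        have h1 : (T \ A).card = T.card - A.card := Finset.card_sdiff_of_subset hsub
        have h2 := Finset.card_le_card hsub
        omega
      have c4 : T.card - d = (A.card - d) + (T \ A).card := by omega
      rw [c1, c2, c4, pow_add, pow_add, neg_pow]
      ring
  rw [step, ← Finset.mul_sum, HTP_sum_pow_card, show (-y) + x = x - y by ring]

private lemma HTP_subset_compl (W V : Finset ι) : W ⊆ Vᶜ ↔ Disjoint W V := by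
  constructor
  · intro h
    rw [Finset.disjoint_left]
    intro a ha hv
    exact (Finset.mem_compl.mp (h ha)) hv
  · intro h a ha
    exact Finset.mem_compl.mpr (fun hv => (Finset.disjoint_left.mp h) ha hv)

private lemma HTP_moebius (h : ℕ → ℝ) (A : Finset ι) :
    ∑ W ∈ A.powerset, ∑ U ∈ W.powerset, (-1:ℝ) ^ (W \ U).card * h U.card = h A.card := by
  calc ∑ W ∈ A.powerset, ∑ U ∈ W.powerset, (-1:ℝ)^(W\U).card * h U.card
      = ∑ U ∈ A.powerset, ∑ W ∈ univ.filter (fun W => U ⊆ W ∧ W ⊆ A),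
          (-1:ℝ)^(W\U).card * h U.card := by
        apply Finset.sum_comm'
        intro W U
        simp only [Finset.mem_powerset, Finset.mem_filter, Finset.mem_univ, true_and]
        constructor
        · rintro ⟨h1, h2⟩; exact ⟨⟨h2, h1⟩, h2.trans h1⟩
        · rintro ⟨⟨h1, h2⟩, _⟩; exact ⟨h2, h1⟩
    _ = ∑ U ∈ A.powerset, (if A = U then h U.card else 0) := by
        apply Finset.sum_congr rfl
        intro U hU
        have hUA : U ⊆ A := Finset.mem_powerset.mp hU
        rw [← Finset.sum_mul]
        have e1 : ∑ W ∈ univ.filter (fun W => U ⊆ W ∧ W ⊆ A), (-1:ℝ)^(W\U).card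
            = ∑ S ∈ (A\U).powerset, (-1:ℝ)^S.card := by
          apply Finset.sum_nbij' (fun W => W \ U) (fun S => U ∪ S)
          · intro W hW
            simp only [Finset.mem_filter, Finset.mem_univ, true_and] at hW
            simp only [Finset.mem_powerset]
            intro a ha
            simp only [Finset.mem_sdiff] at ha ⊢
            exact ⟨hW.2 ha.1, ha.2⟩
          · intro S hS
            simp only [Finset.mem_powerset] at hS
            simp only [Finset.mem_filter, Finset.mem_univ, true_and]
            constructor
            · exact Finset.subset_union_left
            · apply Finset.union_subset hUA
              exact hS.trans Finset.sdiff_subset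
          · intro W hW
            simp only [Finset.mem_filter, Finset.mem_univ, true_and] at hW
            exact Finset.union_sdiff_of_subset hW.1
          · intro S hS
            simp only [Finset.mem_powerset] at hS
            apply Finset.union_sdiff_cancel_left
            rw [Finset.disjoint_right]
            intro a ha
            exact (Finset.mem_sdiff.mp (hS ha)).2
          · intro W _; rfl
        rw [e1]
        -- ∑_{S ⊆ A\U} (-1)^|S| = ite (A\U = ∅) 1 0, and A\U = ∅ ↔ A = U
        have e2 : ∑ S ∈ (A\U).powerset, (-1:ℝ)^S.card = if A = U then 1 else 0 := by
          have h3 := HTP_sum_pow_card (A\U) (-1) 1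
          simp only [one_pow, mul_one] at h3
          have h4 : (-1:ℝ) + 1 = 0 := by norm_num
          rw [h4] at h3
          rw [h3, zero_pow_eq]
          have h7 : (#(A\U) = 0) = (A = U) := by
            rw [Finset.card_eq_zero, Finset.sdiff_eq_empty_iff_subset]
            exact propext ⟨fun h5 => Finset.Subset.antisymm h5 hUA,
              fun h5 => by rw [h5]⟩
          exact if_congr (iff_of_eq h7) rfl rfl
        rw [e2]
        by_cases h6 : A = U <;> simp [h6]
    _ = h A.card := by
        rw [Finset.sum_ite_eq A.powerset A (fun U => h U.card)]
        simp [Finset.mem_powerset_self]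

private lemma HTP_keyx (d : ℕ) (f : Finset ι → ℝ) (hf : IsHarmonic d f) (V : Finset ι)
    (x y : ℝ) :
    ∑ T ∈ univ.filter (fun T : Finset ι => V ⊆ T),
        (-1:ℝ) ^ (T \ V).card * tilde d f T * x ^ Tᶜ.card * y ^ (T.card - d)
      = tilde d f V * x ^ d * (x - y) ^ (Vᶜ.card - d) * y ^ (V.card - d) := by
  set n := Fintype.card ι with hn
  set m := V.card with hm
  calc ∑ T ∈ univ.filter (fun T : Finset ι => V ⊆ T),
        (-1:ℝ) ^ (T \ V).card * tilde d f T * x ^ Tᶜ.card * y ^ (T.card - d)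
      = ∑ T ∈ univ.filter (fun T : Finset ι => V ⊆ T),
          ∑ Z ∈ univ.filter (fun Z : Finset ι => Z ⊆ T ∧ Z.card = d),
            f Z * ((-1:ℝ) ^ (T \ V).card * x ^ Tᶜ.card * y ^ (T.card - d)) := by
        apply Finset.sum_congr rfl
        intro T _
        rw [show tilde d f T = ∑ Z ∈ univ.filter (fun Z : Finset ι => Z ⊆ T ∧ Z.card = d), f Z
          from by rw [tilde, HTP_powfilter]]
        rw [Finset.mul_sum, Finset.sum_mul, Finset.sum_mul]
        apply Finset.sum_congr rfl
        intro Z _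
        ring
    _ = ∑ Z ∈ univ.filter (fun Z : Finset ι => Z.card = d),
          ∑ T ∈ univ.filter (fun T : Finset ι => V ∪ Z ⊆ T),
            f Z * ((-1:ℝ) ^ (T \ V).card * x ^ Tᶜ.card * y ^ (T.card - d)) := by
        apply Finset.sum_comm'
        intro T Z
        simp only [Finset.mem_filter, Finset.mem_univ, true_and, Finset.union_subset_iff]
        tauto
    _ = ∑ Z ∈ univ.filter (fun Z : Finset ι => Z.card = d),
          f Z * ((-1:ℝ) ^ (Z \ V).card * y ^ (V \ Z).card * (x - y) ^ ((V ∪ Z)ᶜ).card) := by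
        apply Finset.sum_congr rfl
        intro Z hZ
        simp only [Finset.mem_filter, Finset.mem_univ, true_and] at hZ
        rw [← Finset.mul_sum]
        congr 1
        have hd2 : d ≤ (V ∪ Z).card := by
          rw [← hZ]; exact Finset.card_le_card Finset.subset_union_right
        rw [HTP_inner_sum d V (V ∪ Z) Finset.subset_union_left hd2 x y]
        have e1 : (V ∪ Z) \ V = Z \ V := Finset.union_sdiff_left V Z
        have e2 : (V ∪ Z).card - d = (V \ Z).card := by
          have := Finset.card_sdiff_add_card V Z
          omega
        rw [e1, e2]
    _ = ∑ Z ∈ univ.filter (fun Z : Finset ι => Z.card = d),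
          f Z * ((-1:ℝ) ^ (Z \ V).card * y ^ ((m + (Z \ V).card) - d)
            * (x - y) ^ (n - (m + (Z \ V).card))) := by
        apply Finset.sum_congr rfl
        intro Z hZ
        simp only [Finset.mem_filter, Finset.mem_univ, true_and] at hZ
        have h1 := Finset.card_sdiff_add_card V Z
        have h2 := Finset.card_sdiff_add_card Z V
        have h3 : Z ∪ V = V ∪ Z := Finset.union_comm Z V
        rw [h3] at h2
        have h4 := Finset.card_le_univ (V ∪ Z)
        have e1 : (V \ Z).card = (m + (Z \ V).card) - d := by omega
        have e2 : ((V ∪ Z)ᶜ).card = n - (m + (Z \ V).card) := by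
          rw [Finset.card_compl]; omega
        rw [e1, e2]
    _ = ∑ Z ∈ univ.filter (fun Z : Finset ι => Z.card = d),
          ∑ W ∈ (Z \ V).powerset, f Z *
            (∑ U ∈ W.powerset, (-1:ℝ) ^ (W \ U).card *
              ((-1:ℝ) ^ U.card * y ^ ((m + U.card) - d) * (x - y) ^ (n - (m + U.card)))) := by
        apply Finset.sum_congr rfl
        intro Z _
        rw [← Finset.mul_sum]
        congr 1
        rw [HTP_moebius (fun k => (-1:ℝ) ^ k * y ^ ((m + k) - d) * (x - y) ^ (n - (m + k)))
          (Z \ V)]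
    _ = ∑ W ∈ Vᶜ.powerset,
          ∑ Z ∈ univ.filter (fun Z : Finset ι => Z.card = d ∧ W ⊆ Z), f Z *
            (∑ U ∈ W.powerset, (-1:ℝ) ^ (W \ U).card *
              ((-1:ℝ) ^ U.card * y ^ ((m + U.card) - d) * (x - y) ^ (n - (m + U.card)))) := by
        apply Finset.sum_comm'
        intro Z W
        simp only [Finset.mem_filter, Finset.mem_univ, true_and, Finset.mem_powerset,
          Finset.subset_sdiff, HTP_subset_compl]
        tauto
    _ = ∑ W ∈ Vᶜ.powerset, (if W.card = d then f W else 0) *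
            (∑ U ∈ W.powerset, (-1:ℝ) ^ (W \ U).card *
              ((-1:ℝ) ^ U.card * y ^ ((m + U.card) - d) * (x - y) ^ (n - (m + U.card)))) := by
        apply Finset.sum_congr rfl
        intro W _
        rw [← Finset.sum_mul, HTP_S_eval d f hf W]
    _ = ∑ W ∈ Vᶜ.powerset.filter (fun Z : Finset ι => Z.card = d), f W *
            (∑ j ∈ Finset.range (d+1), ((d.choose j : ℝ)) * ((-1:ℝ) ^ (d - j) *
              ((-1:ℝ) ^ j * y ^ ((m + j) - d) * (x - y) ^ (n - (m + j))))) := by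
        rw [Finset.sum_filter]
        apply Finset.sum_congr rfl
        intro W _
        by_cases h : W.card = d
        · simp only [h, if_pos]
          congr 1
          rw [Finset.sum_powerset, h]
          apply Finset.sum_congr rfl
          intro j hj
          simp only [Finset.mem_range] at hj
          have e : ∀ U ∈ Finset.powersetCard j W, (-1:ℝ) ^ (W \ U).card *
              ((-1:ℝ) ^ U.card * y ^ ((m + U.card) - d) * (x - y) ^ (n - (m + U.card)))
              = (-1:ℝ) ^ (d - j) *
              ((-1:ℝ) ^ j * y ^ ((m + j) - d) * (x - y) ^ (n - (m + j))) := by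
            intro U hU
            rw [Finset.mem_powersetCard] at hU
            have e1 : (W \ U).card = d - j := by
              rw [Finset.card_sdiff_of_subset hU.1, h, hU.2]
            rw [e1, hU.2]
          rw [Finset.sum_congr rfl e, Finset.sum_const, Finset.card_powersetCard, h,
            nsmul_eq_mul]
        · simp [h]
    _ = tilde d f V * x ^ d * (x - y) ^ (Vᶜ.card - d) * y ^ (V.card - d) := by
        rw [← Finset.sum_mul]
        rw [show ∑ W ∈ Vᶜ.powerset.filter (fun Z : Finset ι => Z.card = d), f W
          = tilde d f Vᶜ from rfl]
        rw [HTP_tilde_compl d f hf V]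
        by_cases htv : tilde d f V = 0
        · rw [htv]; ring
        · have hb1 : d ≤ m := by
            by_contra hc
            exact htv (HTP_tilde_zero_lt d f V (by omega))
          have hb2 : m + d ≤ n := by
            by_contra hc
            refine htv (HTP_tilde_zero_gt d f hf V ?_)
            omega
          have hVc : d ≤ Vᶜ.card := by rw [Finset.card_compl]; omega
          obtain ⟨W₀, hW₀sub, hW₀card⟩ := Finset.exists_subset_card_eq hVc
          have hKc : ∑ j ∈ Finset.range (d+1), ((d.choose j : ℝ)) * ((-1:ℝ) ^ (d - j) *
              ((-1:ℝ) ^ j * y ^ ((m + j) - d) * (x - y) ^ (n - (m + j))))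
              = (-1:ℝ) ^ d * (y ^ (m - d) * ((x - y) ^ (n - (m + d)) * x ^ d)) := by
            have hback : ∑ U ∈ W₀.powerset, (-1:ℝ) ^ (W₀ \ U).card *
                ((-1:ℝ) ^ U.card * y ^ ((m + U.card) - d) * (x - y) ^ (n - (m + U.card)))
                = ∑ j ∈ Finset.range (d+1), ((d.choose j : ℝ)) * ((-1:ℝ) ^ (d - j) *
                ((-1:ℝ) ^ j * y ^ ((m + j) - d) * (x - y) ^ (n - (m + j)))) := by
              rw [Finset.sum_powerset, hW₀card]
              apply Finset.sum_congr rfl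
              intro j hj
              have e : ∀ U ∈ Finset.powersetCard j W₀, (-1:ℝ) ^ (W₀ \ U).card *
                  ((-1:ℝ) ^ U.card * y ^ ((m + U.card) - d) * (x - y) ^ (n - (m + U.card)))
                  = (-1:ℝ) ^ (d - j) *
                  ((-1:ℝ) ^ j * y ^ ((m + j) - d) * (x - y) ^ (n - (m + j))) := by
                intro U hU
                rw [Finset.mem_powersetCard] at hU
                have e1 : (W₀ \ U).card = d - j := by
                  rw [Finset.card_sdiff_of_subset hU.1, hW₀card, hU.2]
                rw [e1, hU.2]
              rw [Finset.sum_congr rfl e, Finset.sum_const, Finset.card_powersetCard,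
                hW₀card, nsmul_eq_mul]
            rw [← hback]
            have e : ∀ U ∈ W₀.powerset, (-1:ℝ) ^ (W₀ \ U).card *
                ((-1:ℝ) ^ U.card * y ^ ((m + U.card) - d) * (x - y) ^ (n - (m + U.card)))
                = ((-1:ℝ) ^ d * (y ^ (m - d) * (x - y) ^ (n - (m + d)))) *
                  (y ^ U.card * (x - y) ^ ((W₀ \ U).card)) := by
              intro U hU
              rw [Finset.mem_powerset] at hU
              have hUc : U.card ≤ d := by rw [← hW₀card]; exact Finset.card_le_card hU
              have e1 : (W₀ \ U).card = d - U.card := by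
                rw [Finset.card_sdiff_of_subset hU, hW₀card]
              have e2 : (m + U.card) - d = (m - d) + U.card := by omega
              have e3 : n - (m + U.card) = (n - (m + d)) + (d - U.card) := by omega
              have e4 : (-1:ℝ) ^ (d - U.card) * (-1:ℝ) ^ U.card = (-1:ℝ) ^ d := by
                rw [← pow_add]
                congr 1
                omega
              rw [e1, e2, e3, pow_add, pow_add, ← e4]
              ring
            rw [Finset.sum_congr rfl e, ← Finset.mul_sum, HTP_sum_pow_card W₀ y (x - y),
              show y + (x - y) = x from by ring, hW₀card]
            ring
          rw [hKc]
          have e5 : Vᶜ.card - d = n - (m + d) := by rw [Finset.card_compl]; omega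
          rw [e5]
          have e6 : ((-1:ℝ) ^ d) * ((-1:ℝ) ^ d) = 1 := by
            rw [← pow_add]
            exact Even.neg_one_pow ⟨d, rfl⟩
          calc (-1:ℝ) ^ d * tilde d f V *
                ((-1:ℝ) ^ d * (y ^ (m - d) * ((x - y) ^ (n - (m + d)) * x ^ d)))
              = ((-1:ℝ) ^ d * (-1:ℝ) ^ d) *
                (tilde d f V * x ^ d * (x - y) ^ (n - (m + d)) * y ^ (m - d)) := by ring
            _ = tilde d f V * x ^ d * (x - y) ^ (n - (m + d)) * y ^ (m - d) := by
                rw [e6, one_mul]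

private lemma HTP_keyV (d : ℕ) (f : Finset ι → ℝ) (hf : IsHarmonic d f) (V : Finset ι)
    (x y : ℝ) :
    ∑ T ∈ univ.filter (fun T : Finset ι =>
        (d ≤ T.card ∧ T.card ≤ Fintype.card ι - d) ∧ V ⊆ T),
      (-1:ℝ) ^ (T \ V).card * tilde d f T * x ^ (Tᶜ.card - d) * y ^ (T.card - d)
      = tilde d f V * (x - y) ^ (Vᶜ.card - d) * y ^ (V.card - d) := by
  have main : ∀ x : ℝ, x ≠ 0 →
      ∑ T ∈ univ.filter (fun T : Finset ι =>
          (d ≤ T.card ∧ T.card ≤ Fintype.card ι - d) ∧ V ⊆ T),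
        (-1:ℝ) ^ (T \ V).card * tilde d f T * x ^ (Tᶜ.card - d) * y ^ (T.card - d)
        = tilde d f V * (x - y) ^ (Vᶜ.card - d) * y ^ (V.card - d) := by
    intro x hx
    apply mul_left_cancel₀ (pow_ne_zero d hx)
    calc x ^ d * ∑ T ∈ univ.filter (fun T : Finset ι =>
          (d ≤ T.card ∧ T.card ≤ Fintype.card ι - d) ∧ V ⊆ T),
        (-1:ℝ) ^ (T \ V).card * tilde d f T * x ^ (Tᶜ.card - d) * y ^ (T.card - d)
        = ∑ T ∈ univ.filter (fun T : Finset ι =>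
            (d ≤ T.card ∧ T.card ≤ Fintype.card ι - d) ∧ V ⊆ T),
          (-1:ℝ) ^ (T \ V).card * tilde d f T * x ^ Tᶜ.card * y ^ (T.card - d) := by
          rw [Finset.mul_sum]
          apply Finset.sum_congr rfl
          intro T hT
          simp only [Finset.mem_filter, Finset.mem_univ, true_and] at hT
          have h1 := Finset.card_le_univ T
          have h2 : d + (Tᶜ.card - d) = Tᶜ.card := by
            rw [Finset.card_compl]; omega
          calc x ^ d * ((-1:ℝ) ^ (T \ V).card * tilde d f T * x ^ (Tᶜ.card - d)
                * y ^ (T.card - d))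
              = (-1:ℝ) ^ (T \ V).card * tilde d f T * (x ^ d * x ^ (Tᶜ.card - d))
                * y ^ (T.card - d) := by ring
            _ = (-1:ℝ) ^ (T \ V).card * tilde d f T * x ^ Tᶜ.card * y ^ (T.card - d) := by
                rw [← pow_add, h2]
      _ = ∑ T ∈ univ.filter (fun T : Finset ι => V ⊆ T),
          (-1:ℝ) ^ (T \ V).card * tilde d f T * x ^ Tᶜ.card * y ^ (T.card - d) := by
          apply Finset.sum_subset
          · intro T hT
            simp only [Finset.mem_filter, Finset.mem_univ, true_and] at hT ⊢
            exact hT.2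
          · intro T hT hT'
            simp only [Finset.mem_filter, Finset.mem_univ, true_and] at hT hT'
            have : ¬ (d ≤ T.card ∧ T.card ≤ Fintype.card ι - d) := fun hc => hT' ⟨hc, hT⟩
            have hz : tilde d f T = 0 := by
              by_cases h1 : T.card < d
              · exact HTP_tilde_zero_lt d f T h1
              · apply HTP_tilde_zero_gt d f hf T
                omega
            rw [hz]; ring
      _ = tilde d f V * x ^ d * (x - y) ^ (Vᶜ.card - d) * y ^ (V.card - d) :=
          HTP_keyx d f hf V x y
      _ = x ^ d * (tilde d f V * (x - y) ^ (Vᶜ.card - d) * y ^ (V.card - d)) := by ring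
  have hF : Continuous (fun x : ℝ => ∑ T ∈ univ.filter (fun T : Finset ι =>
      (d ≤ T.card ∧ T.card ≤ Fintype.card ι - d) ∧ V ⊆ T),
      (-1:ℝ) ^ (T \ V).card * tilde d f T * x ^ (Tᶜ.card - d) * y ^ (T.card - d)) := by
    apply continuous_finset_sum
    intro T _
    exact ((continuous_const.mul (continuous_pow _)).mul continuous_const)
  have hG : Continuous (fun x : ℝ =>
      tilde d f V * (x - y) ^ (Vᶜ.card - d) * y ^ (V.card - d)) := by
    exact ((continuous_const.mul (((continuous_id.sub continuous_const).pow _))).mul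
      continuous_const)
  have heq := Continuous.ext_on (dense_compl_singleton (0:ℝ)) hF hG
    (fun z hz => main z (Set.mem_compl_singleton_iff.mp hz))
  exact congrFun heq x

/-- `Z_{D,f}(λ,x,y) = (-1)^d ∑_{T, d ≤ |T| ≤ n-d} f̃(T) λ^{s(E)-s(T)} (x-y)^{|T|-d} y^{|E-T|-d}`. -/
theorem stmt_16 (s t : Finset ι → ℕ) (hD : IsDemimatroidN s t)
    (d : ℕ) (f : Finset ι → ℝ) (hf : IsHarmonic d f) (lam x y : ℝ) :
    Zdemi s d f lam x y
      = (-1 : ℝ) ^ d *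
          ∑ T ∈ Finset.univ.filter
              (fun T : Finset ι => d ≤ T.card ∧ T.card ≤ Fintype.card ι - d),
            tilde d f T * lam ^ (s Finset.univ - s T) *
              (x - y) ^ (T.card - d) * y ^ (Tᶜ.card - d) := by
  have e6 : ((-1:ℝ) ^ d) * ((-1:ℝ) ^ d) = 1 := by
    rw [← pow_add]; exact Even.neg_one_pow ⟨d, rfl⟩
  calc Zdemi s d f lam x y
      = ∑ T ∈ Finset.univ.filter
            (fun T : Finset ι => d ≤ T.card ∧ T.card ≤ Fintype.card ι - d),
          ∑ V ∈ T.powerset,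
            lam ^ (s Finset.univ - s Vᶜ) *
              ((-1:ℝ) ^ (T \ V).card * tilde d f T * x ^ (Tᶜ.card - d) *
                y ^ (T.card - d)) := by
        rw [Zdemi]
        apply Finset.sum_congr rfl
        intro T _
        have hχ : ∑ X ∈ T.powerset, (-1:ℝ) ^ X.card * lam ^ (s Finset.univ - s (X ∪ Tᶜ))
            = ∑ V ∈ T.powerset, (-1:ℝ) ^ (T \ V).card * lam ^ (s Finset.univ - s Vᶜ) := by
          apply Finset.sum_nbij' (fun X => T \ X) (fun V => T \ V)
          · intro X _
            exact Finset.mem_powerset.mpr Finset.sdiff_subset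
          · intro V _
            exact Finset.mem_powerset.mpr Finset.sdiff_subset
          · intro X hX
            exact Finset.sdiff_sdiff_eq_self (Finset.mem_powerset.mp hX)
          · intro V hV
            exact Finset.sdiff_sdiff_eq_self (Finset.mem_powerset.mp hV)
          · intro X hX
            have h1 : T \ (T \ X) = X :=
              Finset.sdiff_sdiff_eq_self (Finset.mem_powerset.mp hX)
            have h2 : (T \ X)ᶜ = X ∪ Tᶜ := by
              ext a
              simp only [Finset.mem_compl, Finset.mem_sdiff, Finset.mem_union, not_and,
                not_not]
              tauto
            rw [h1, h2]
        rw [hχ, Finset.mul_sum, Finset.sum_mul, Finset.sum_mul]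
        apply Finset.sum_congr rfl
        intro V _
        ring
    _ = ∑ V ∈ (univ : Finset (Finset ι)),
          ∑ T ∈ univ.filter (fun T : Finset ι =>
              (d ≤ T.card ∧ T.card ≤ Fintype.card ι - d) ∧ V ⊆ T),
            lam ^ (s Finset.univ - s Vᶜ) *
              ((-1:ℝ) ^ (T \ V).card * tilde d f T * x ^ (Tᶜ.card - d) *
                y ^ (T.card - d)) := by
        apply Finset.sum_comm'
        intro T V
        simp only [Finset.mem_filter, Finset.mem_univ, true_and, Finset.mem_powerset,
          and_true]
        try tauto
    _ = ∑ V ∈ (univ : Finset (Finset ι)),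
          lam ^ (s Finset.univ - s Vᶜ) *
            (tilde d f V * (x - y) ^ (Vᶜ.card - d) * y ^ (V.card - d)) := by
        apply Finset.sum_congr rfl
        intro V _
        rw [← Finset.mul_sum, HTP_keyV d f hf V x y]
    _ = ∑ V ∈ Finset.univ.filter
            (fun T : Finset ι => d ≤ T.card ∧ T.card ≤ Fintype.card ι - d),
          lam ^ (s Finset.univ - s Vᶜ) *
            (tilde d f V * (x - y) ^ (Vᶜ.card - d) * y ^ (V.card - d)) := by
        symm
        apply Finset.sum_subset (Finset.filter_subset _ _)
        intro V _ hV'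
        simp only [Finset.mem_filter, Finset.mem_univ, true_and] at hV'
        have hz : tilde d f V = 0 := by
          by_cases h1 : V.card < d
          · exact HTP_tilde_zero_lt d f V h1
          · exact HTP_tilde_zero_gt d f hf V (by omega)
        rw [hz]; ring
    _ = (-1 : ℝ) ^ d *
          ∑ T ∈ Finset.univ.filter
              (fun T : Finset ι => d ≤ T.card ∧ T.card ≤ Fintype.card ι - d),
            tilde d f T * lam ^ (s Finset.univ - s T) *
              (x - y) ^ (T.card - d) * y ^ (Tᶜ.card - d) := by
        rw [Finset.mul_sum]
        symm
        apply Finset.sum_nbij' (fun T : Finset ι => Tᶜ) (fun V : Finset ι => Vᶜ)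
        · intro T hT
          simp only [Finset.mem_filter, Finset.mem_univ, true_and] at hT ⊢
          have := Finset.card_le_univ T
          rw [Finset.card_compl]
          omega
        · intro V hV
          simp only [Finset.mem_filter, Finset.mem_univ, true_and] at hV ⊢
          have := Finset.card_le_univ V
          rw [Finset.card_compl]
          omega
        · intro T _; exact compl_compl T
        · intro V _; exact compl_compl V
        · intro T _
          rw [compl_compl, HTP_tilde_compl d f hf T]
          calc (-1:ℝ) ^ d * (tilde d f T * lam ^ (s Finset.univ - s T) *
                (x - y) ^ (T.card - d) * y ^ (Tᶜ.card - d))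
              = lam ^ (s Finset.univ - s T) *
                ((tilde d f T * (x - y) ^ (T.card - d) * y ^ (Tᶜ.card - d)) * (-1:ℝ)^d)
                := by ring
            _ = lam ^ (s Finset.univ - s T) *
                ((-1:ℝ) ^ d * tilde d f T * (x - y) ^ (T.card - d) * y ^ (Tᶜ.card - d))
                := by ring
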